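/- arXiv:1706.08342 — 4 statements merged into one kernel-verified Lean document; each statement's English description precedes it below -/
import Mathlib

section
/- Let n > d ≥ 1 be integers and L : [0,1] → ℝ be a nonnegative continuous concave function with L(0) = 0. Then ∫₀¹ (1−s)^{n−d−1}(d − n s) L(s)^{d−1} ds ≥ 0. -/
/-!
The weight `w(s) = (1 - s)^(n-d-1) (d - n s)` is the derivative of `s^d (1 - s)^(n-d)` divided by
`s^(d-1)`, so `∫₀¹ w(s) s^(d-1) ds = 0`; moreover `w` changes sign exactly once, at `c = d/n`.
Concavity and `L 0 = 0` make `L(s)/s` nonincreasing, so `c^(d-1) L(s)^(d-1) - L(c)^(d-1) s^(d-1)`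
has the same sign as `w(s)`. Integrating their product gives
`c^(d-1) ∫ w L^(d-1) ≥ L(c)^(d-1) ∫ w s^(d-1) = 0`.
-/

open Set MeasureTheory

theorem ConcaveOn.mul_le_mul_of_map_zero {𝕜 : Type*} [Field 𝕜] [LinearOrder 𝕜]
    [IsStrictOrderedRing 𝕜] {D : Set 𝕜} {f : 𝕜 → 𝕜} (hf : ConcaveOn 𝕜 D f) (h0 : 0 ∈ D)
    (hf0 : f 0 = 0) {s t : 𝕜} (hs : s ∈ D) (ht : t ∈ D) (hs0 : 0 ≤ s) (hst : s ≤ t) :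
    s * f t ≤ t * f s := by
  rcases hs0.eq_or_lt with rfl | hs0
  · simp [hf0]
  have hslope := hf.antitoneOn_slope_gt h0 ⟨hs, hs0⟩ ⟨ht, hs0.trans_le hst⟩ hst
  simp only [slope_def_field, hf0, sub_zero] at hslope
  rw [div_le_div_iff₀ (hs0.trans_le hst) hs0] at hslope
  rwa [mul_comm s, mul_comm t]

theorem intervalIntegral.integral_mul_nonneg_of_sign_change {w f g : ℝ → ℝ} {a b c : ℝ}
    (hab : a ≤ b) (hwf : IntervalIntegrable (fun s => w s * f s) volume a b)
    (hwg : IntervalIntegrable (fun s => w s * g s) volume a b)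
    (hwg0 : ∫ s in a..b, w s * g s = 0) (hgc : 0 < g c)
    (hleft : ∀ s ∈ Icc a b, s ≤ c → 0 ≤ w s ∧ f c * g s ≤ g c * f s)
    (hright : ∀ s ∈ Icc a b, c ≤ s → w s ≤ 0 ∧ f s * g c ≤ g s * f c) :
    0 ≤ ∫ s in a..b, w s * f s := by
  have hpt : ∀ s ∈ Icc a b, 0 ≤ g c * (w s * f s) - f c * (w s * g s) := by
    intro s hs
    rw [show g c * (w s * f s) - f c * (w s * g s) = w s * (g c * f s - f c * g s) by ring]
    rcases le_total s c with hsc | hcs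
    · obtain ⟨hw, hfg⟩ := hleft s hs hsc
      exact mul_nonneg hw (sub_nonneg.2 hfg)
    · obtain ⟨hw, hfg⟩ := hright s hs hcs
      exact mul_nonneg_of_nonpos_of_nonpos hw (sub_nonpos.2 (by linarith))
  have hint : 0 ≤ ∫ s in a..b, (g c * (w s * f s) - f c * (w s * g s)) :=
    intervalIntegral.integral_nonneg hab hpt
  rw [intervalIntegral.integral_sub (hwf.const_mul _) (hwg.const_mul _),
    intervalIntegral.integral_const_mul, intervalIntegral.integral_const_mul, hwg0,
    mul_zero, sub_zero] at hint
  exact nonneg_of_mul_nonneg_right hint hgc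

noncomputable def weight (n d : ℕ) (s : ℝ) : ℝ := (1 - s) ^ (n - d - 1) * ((d : ℝ) - n * s)

theorem continuous_weight (n d : ℕ) : Continuous (weight n d) := by
  unfold weight
  fun_prop

theorem weight_nonneg {n d : ℕ} {s : ℝ} (hs1 : s ≤ 1) (hsc : s ≤ d / n) : 0 ≤ weight n d s := by
  refine mul_nonneg (pow_nonneg (sub_nonneg.2 hs1) _) (sub_nonneg.2 ?_)
  rcases (Nat.cast_nonneg n : (0 : ℝ) ≤ n).eq_or_lt with hn | hn
  · simp [← hn]
  · rwa [le_div_iff₀ hn, mul_comm] at hsc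

theorem weight_nonpos {n d : ℕ} {s : ℝ} (hn : 0 < n) (hs1 : s ≤ 1) (hcs : d / n ≤ s) :
    weight n d s ≤ 0 := by
  refine mul_nonpos_of_nonneg_of_nonpos (pow_nonneg (sub_nonneg.2 hs1) _) (sub_nonpos.2 ?_)
  rwa [div_le_iff₀ (by exact_mod_cast hn), mul_comm] at hcs

theorem hasDerivAt_pow_mul_one_sub_pow {n d : ℕ} (hd : 1 ≤ d) (hn : d < n) (s : ℝ) :
    HasDerivAt (fun s : ℝ => s ^ d * (1 - s) ^ (n - d)) (weight n d s * s ^ (d - 1)) s := by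
  obtain ⟨e, rfl⟩ : ∃ e, d = e + 1 := ⟨d - 1, by omega⟩
  obtain ⟨m, rfl⟩ : ∃ m, n = e + 1 + m + 1 := ⟨n - e - 2, by omega⟩
  have hsub : e + 1 + m + 1 - (e + 1) = m + 1 := by omega
  have hsub' : e + 1 + m + 1 - (e + 1) - 1 = m := by omega
  rw [hsub]
  refine ((hasDerivAt_pow (e + 1) s).fun_mul
    (((hasDerivAt_id s).const_sub 1).fun_pow (m + 1))).congr_deriv ?_
  simp only [weight, hsub', Nat.add_sub_cancel, id]
  push_cast
  ring

theorem integral_weight_mul_pow_eq_zero {n d : ℕ} (hd : 1 ≤ d) (hn : d < n) :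
    ∫ s in (0 : ℝ)..1, weight n d s * s ^ (d - 1) = 0 := by
  rw [intervalIntegral.integral_eq_sub_of_hasDerivAt
    (fun s _ => hasDerivAt_pow_mul_one_sub_pow hd hn s)
    (((continuous_weight n d).mul (continuous_pow _)).intervalIntegrable _ _)]
  simp [zero_pow (show n - d ≠ 0 by omega), zero_pow (show d ≠ 0 by omega)]

/-- For integers `n > d ≥ 1` and `L : [0,1] → ℝ` nonnegative, continuous, concave with
`L 0 = 0`, one has `∫₀¹ (1−s)^(n−d−1)(d − n s) L(s)^(d−1) ds ≥ 0`. -/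
theorem integral_nonneg_of_concave (n d : ℕ) (hd : 1 ≤ d) (hn : d < n) (L : ℝ → ℝ)
    (hcont : ContinuousOn L (Set.Icc 0 1))
    (hnn : ∀ s ∈ Set.Icc (0 : ℝ) 1, 0 ≤ L s)
    (hconc : ConcaveOn ℝ (Set.Icc 0 1) L) (h0 : L 0 = 0) :
    0 ≤ ∫ s in (0:ℝ)..1, (1 - s) ^ (n - d - 1) * ((d : ℝ) - n * s) * L s ^ (d - 1) := by
  set c : ℝ := d / n
  have hn0 : 0 < n := by omega
  have hnpos : (0 : ℝ) < n := by exact_mod_cast hn0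
  have hcpos : 0 < c := div_pos (by exact_mod_cast hd) hnpos
  have hc : c ∈ Icc (0 : ℝ) 1 := ⟨hcpos.le, (div_le_one hnpos).2 (by exact_mod_cast hn.le)⟩
  have hratio : ∀ s ∈ Icc (0 : ℝ) 1, ∀ t ∈ Icc (0 : ℝ) 1, s ≤ t →
      L t ^ (d - 1) * s ^ (d - 1) ≤ t ^ (d - 1) * L s ^ (d - 1) := fun s hs t ht hst => by
    simpa only [mul_pow, mul_comm (L t ^ (d - 1))] using pow_le_pow_left₀
      (mul_nonneg hs.1 (hnn t ht))
      (hconc.mul_le_mul_of_map_zero (left_mem_Icc.2 zero_le_one) h0 hs ht hs.1 hst) (d - 1)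
  refine intervalIntegral.integral_mul_nonneg_of_sign_change (w := weight n d)
    (g := fun s => s ^ (d - 1)) (c := c) zero_le_one ?_
    (((continuous_weight n d).mul (continuous_pow _)).intervalIntegrable _ _)
    (integral_weight_mul_pow_eq_zero hd hn) (pow_pos hcpos _)
    (fun s hs hsc => ⟨weight_nonneg hs.2 hsc, hratio s hs c hc hsc⟩)
    (fun s hs hcs => ⟨weight_nonpos hn0 hs.2 hcs, hratio c hc s hs hcs⟩)
  apply ContinuousOn.intervalIntegrable
  rw [uIcc_of_le zero_le_one]
  exact (continuous_weight n d).continuousOn.mul (hcont.pow _)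
end

section
/- Let ψ(t) = c·(1−t²)^{(d−1)/2} on (−1,1) for d ≥ 2 and c > 0 chosen so that ∫_{−1}^1 ψ = 1, and let Ψ be its CDF with inverse Ψ^{−1} : (0,1) → (−1,1). Then L(s) = ψ(Ψ^{−1}(s))^{d/(d−1)} is concave on (0,1). -/
/-!
Put `p = d/(d-1)` and `F = ψ ^ p = c ^ p (1 - t²)^(d/2)`, so that `L = F ∘ Ψ⁻¹`. A direct
computation gives `F' = h · ψ` with `h t = -K t / √(1 - t²)`, `K > 0`. Cauchy's mean value theorem
for `F` and `Ψ` on `[Ψ⁻¹ s₁, Ψ⁻¹ s₂]` then shows that every slope of `L` is a value of `h` at a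
point between `Ψ⁻¹ s₁` and `Ψ⁻¹ s₂`. As `t / √(1 - t²) = tan (arcsin t)` and `Ψ⁻¹` are
increasing, the slopes of `L` decrease, i.e. `L` is concave.
-/

open Set Real

section LeftInverse

variable {J S : Set ℝ} {Ψ ψ F h g : ℝ → ℝ}

lemma strictMonoOn_of_leftInvOn (hΨ : MonotoneOn Ψ J) (hgJ : MapsTo g S J)
    (hΨg : LeftInvOn Ψ g S) : StrictMonoOn g S := by
  intro s₁ hs₁ s₂ hs₂ hlt
  by_contra! hle
  have := hΨ (hgJ hs₂) (hgJ hs₁) hle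
  rw [hΨg hs₁, hΨg hs₂] at this
  linarith

lemma exists_slope_comp_eq_of_leftInvOn (hJ : Convex ℝ J) (hΨ : ∀ x ∈ J, HasDerivAt Ψ (ψ x) x)
    (hψ : ∀ x ∈ J, 0 < ψ x) (hF : ∀ x ∈ J, HasDerivAt F (h x * ψ x) x) (hgJ : MapsTo g S J)
    (hΨg : LeftInvOn Ψ g S) {s₁ s₂ : ℝ} (hs₁ : s₁ ∈ S) (hs₂ : s₂ ∈ S)
    (hlt : s₁ < s₂) :
    ∃ ξ ∈ Ioo (g s₁) (g s₂), (F (g s₂) - F (g s₁)) / (s₂ - s₁) = h ξ := by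
  have hΨmono : MonotoneOn Ψ J :=
    monotoneOn_of_hasDerivWithinAt_nonneg hJ
      (fun x hx => (hΨ x hx).continuousAt.continuousWithinAt)
      (fun x hx => (hΨ x (interior_subset hx)).hasDerivWithinAt)
      (fun x hx => (hψ x (interior_subset hx)).le)
  have hglt : g s₁ < g s₂ := strictMonoOn_of_leftInvOn hΨmono hgJ hΨg hs₁ hs₂ hlt
  have hIcc : Icc (g s₁) (g s₂) ⊆ J := hJ.ordConnected.out (hgJ hs₁) (hgJ hs₂)
  obtain ⟨ξ, hξ, hcauchy⟩ := exists_ratio_hasDerivAt_eq_ratio_slope F (fun x => h x * ψ x) hglt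
    (fun x hx => (hF x (hIcc hx)).continuousAt.continuousWithinAt)
    (fun x hx => hF x (hIcc (Ioo_subset_Icc_self hx))) Ψ ψ
    (fun x hx => (hΨ x (hIcc hx)).continuousAt.continuousWithinAt)
    (fun x hx => hΨ x (hIcc (Ioo_subset_Icc_self hx)))
  refine ⟨ξ, hξ, ?_⟩
  rw [hΨg hs₁, hΨg hs₂] at hcauchy
  have hψξ : ψ ξ ≠ 0 := (hψ ξ (hIcc (Ioo_subset_Icc_self hξ))).ne'
  rw [div_eq_iff (sub_pos.2 hlt).ne']
  exact mul_right_cancel₀ hψξ (by linear_combination -hcauchy)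

theorem concaveOn_comp_of_leftInvOn (hJ : Convex ℝ J) (hS : Convex ℝ S)
    (hΨ : ∀ x ∈ J, HasDerivAt Ψ (ψ x) x) (hψ : ∀ x ∈ J, 0 < ψ x)
    (hF : ∀ x ∈ J, HasDerivAt F (h x * ψ x) x) (hh : AntitoneOn h J) (hgJ : MapsTo g S J)
    (hΨg : LeftInvOn Ψ g S) :
    ConcaveOn ℝ S (F ∘ g) := by
  refine concaveOn_of_slope_anti_adjacent hS fun {x y z} hx hz hxy hyz => ?_
  have hy : y ∈ S := hS.ordConnected.out hx hz ⟨hxy.le, hyz.le⟩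
  obtain ⟨ξ, hξ, hξeq⟩ := exists_slope_comp_eq_of_leftInvOn hJ hΨ hψ hF hgJ hΨg hx hy hxy
  obtain ⟨η, hη, hηeq⟩ := exists_slope_comp_eq_of_leftInvOn hJ hΨ hψ hF hgJ hΨg hy hz hyz
  have hξJ : ξ ∈ J := hJ.ordConnected.out (hgJ hx) (hgJ hy) (Ioo_subset_Icc_self hξ)
  have hηJ : η ∈ J := hJ.ordConnected.out (hgJ hy) (hgJ hz) (Ioo_subset_Icc_self hη)
  simp only [Function.comp_apply, hξeq, hηeq]
  exact hh hξJ hηJ (hξ.2.trans hη.1).le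

end LeftInverse

lemma continuous_mul_one_sub_sq_rpow (c : ℝ) {a : ℝ} (ha : 0 < a) :
    Continuous fun t : ℝ => c * (1 - t ^ 2) ^ a :=
  continuous_const.mul ((continuous_const.sub (continuous_pow 2)).rpow_const fun _ => Or.inr ha.le)

lemma mul_one_sub_sq_rpow_pos {c : ℝ} (hc : 0 < c) (a : ℝ) {t : ℝ} (ht : t ∈ Ioo (-1 : ℝ) 1) :
    0 < c * (1 - t ^ 2) ^ a :=
  mul_pos hc (rpow_pos_of_pos (by nlinarith [ht.1, ht.2]) a)

lemma hasDerivAt_one_sub_sq_rpow (a : ℝ) {t : ℝ} (ht : t ∈ Ioo (-1 : ℝ) 1) :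
    HasDerivAt (fun t : ℝ => (1 - t ^ 2) ^ a) (-(2 * t) * a * (1 - t ^ 2) ^ (a - 1)) t := by
  have h1 : 0 < 1 - t ^ 2 := by nlinarith [ht.1, ht.2]
  exact ((hasDerivAt_pow 2 t).const_sub 1).rpow_const (Or.inl h1.ne') |>.congr_deriv (by ring)

lemma hasDerivAt_const_mul_one_sub_sq_rpow {c : ℝ} (hc : 0 < c) (p e : ℝ) {t : ℝ}
    (ht : t ∈ Ioo (-1 : ℝ) 1) :
    HasDerivAt (fun t : ℝ => c ^ p * (1 - t ^ 2) ^ (e / 2))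
      (-(c ^ (p - 1) * e) * (t / √(1 - t ^ 2)) * (c * (1 - t ^ 2) ^ ((e - 1) / 2))) t := by
  have h1 : 0 < 1 - t ^ 2 := by nlinarith [ht.1, ht.2]
  refine (hasDerivAt_one_sub_sq_rpow (e / 2) ht).const_mul (c ^ p) |>.congr_deriv ?_
  have hc' : c ^ p = c ^ (p - 1) * c := by rw [← rpow_add_one hc.ne']; ring_nf
  have hsplit : (1 - t ^ 2) ^ ((e - 1) / 2) = (1 - t ^ 2) ^ (e / 2 - 1) * √(1 - t ^ 2) := by
    rw [sqrt_eq_rpow, ← rpow_add h1]; ring_nf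
  rw [hc', hsplit]
  field_simp

lemma mul_one_sub_sq_rpow_rpow {c : ℝ} (hc : 0 < c) {e : ℝ} (he : 1 < e) {t : ℝ}
    (ht : t ∈ Ioo (-1 : ℝ) 1) :
    (c * (1 - t ^ 2) ^ ((e - 1) / 2)) ^ (e / (e - 1)) =
      c ^ (e / (e - 1)) * (1 - t ^ 2) ^ (e / 2) := by
  have h1 : 0 < 1 - t ^ 2 := by nlinarith [ht.1, ht.2]
  rw [mul_rpow hc.le (rpow_nonneg h1.le _), ← rpow_mul h1.le]
  congr 2
  field_simp [(sub_pos.2 he).ne']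

lemma monotoneOn_div_sqrt_one_sub_sq :
    MonotoneOn (fun t : ℝ => t / √(1 - t ^ 2)) (Ioo (-1) 1) := by
  intro x hx y hy hxy
  simp only [← tan_arcsin]
  have hmaps : ∀ t ∈ Ioo (-1 : ℝ) 1, arcsin t ∈ Ioo (-(π / 2)) (π / 2) := fun t ht =>
    ⟨neg_pi_div_two_lt_arcsin.2 ht.1, arcsin_lt_pi_div_two.2 ht.2⟩
  exact strictMonoOn_tan.monotoneOn (hmaps x hx) (hmaps y hy) (arcsin_le_arcsin hxy)

theorem ball_L_concave_general (d : ℕ) (hd : 2 ≤ d) (c : ℝ) (hc : 0 < c) (ψ Ψ g : ℝ → ℝ)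
    (hψ : ∀ t, ψ t = c * (1 - t ^ 2) ^ (((d : ℝ) - 1) / 2))
    (hΨ : ∀ p, Ψ p = ∫ t in (-1 : ℝ)..p, ψ t)
    (hg2 : ∀ s ∈ Set.Ioo (0 : ℝ) 1, g s ∈ Set.Ioo (-1 : ℝ) 1 ∧ Ψ (g s) = s) :
    ConcaveOn ℝ (Set.Ioo 0 1) (fun s => ψ (g s) ^ ((d : ℝ) / ((d : ℝ) - 1))) := by
  have he : (1 : ℝ) < d := by exact_mod_cast hd
  obtain rfl : ψ = fun t => c * (1 - t ^ 2) ^ (((d : ℝ) - 1) / 2) := funext hψ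
  obtain rfl : Ψ = fun p => ∫ t in (-1 : ℝ)..p, c * (1 - t ^ 2) ^ (((d : ℝ) - 1) / 2) := funext hΨ
  have hψc := continuous_mul_one_sub_sq_rpow c (a := ((d : ℝ) - 1) / 2) (by linarith)
  have hconc := concaveOn_comp_of_leftInvOn (convex_Ioo (-1) 1) (convex_Ioo 0 1)
    (fun x _ => (hψc.integral_hasStrictDerivAt (-1) x).hasDerivAt)
    (fun x hx => mul_one_sub_sq_rpow_pos hc _ hx)
    (fun x hx => hasDerivAt_const_mul_one_sub_sq_rpow hc ((d : ℝ) / ((d : ℝ) - 1)) d hx)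
    (fun x hx y hy hxy => mul_le_mul_of_nonpos_left (monotoneOn_div_sqrt_one_sub_sq hx hy hxy)
      (neg_nonpos.2 (by positivity)))
    (fun s hs => (hg2 s hs).1) (fun s hs => (hg2 s hs).2)
  exact hconc.congr fun s hs => (mul_one_sub_sq_rpow_rpow hc he (hg2 s hs).1).symm

/-- Let `ψ(t) = c (1−t²)^{(d−1)/2}` on `(−1,1)` (`d ≥ 2`, `c > 0`, total integral 1) with
CDF `Ψ` and inverse `g = Ψ⁻¹ : (0,1) → (−1,1)`. Then `s ↦ ψ(Ψ⁻¹(s))^{d/(d−1)}` is concave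
on `(0,1)`. -/
theorem ball_L_concave (d : ℕ) (hd : 2 ≤ d) (c : ℝ) (hc : 0 < c) (ψ Ψ g : ℝ → ℝ)
    (hψ : ∀ t, ψ t = c * (1 - t ^ 2) ^ (((d : ℝ) - 1) / 2))
    (hint : ∫ t in Set.Ioo (-1 : ℝ) 1, ψ t = 1)
    (hΨ : ∀ p, Ψ p = ∫ t in (-1 : ℝ)..p, ψ t)
    (hg1 : ∀ p ∈ Set.Ioo (-1 : ℝ) 1, g (Ψ p) = p)
    (hg2 : ∀ s ∈ Set.Ioo (0 : ℝ) 1, g s ∈ Set.Ioo (-1 : ℝ) 1 ∧ Ψ (g s) = s) :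
    ConcaveOn ℝ (Set.Ioo 0 1) (fun s => ψ (g s) ^ ((d : ℝ) / ((d : ℝ) - 1))) :=
  ball_L_concave_general d hd c hc ψ Ψ g hψ hΨ hg2
end

section
/- For the standard Gaussian CDF Ψ on ℝ with density ψ, the derivative of s ↦ ψ(Ψ^{−1}(s)) exists on (0,1) and is strictly decreasing; consequently ψ∘Ψ^{−1} is strictly concave on (0,1). -/
/-!
Since `Ψ' = ψ > 0`, the inverse function theorem gives `(Ψ⁻¹)' = 1 / ψ ∘ Ψ⁻¹`, and the Gaussian
identity `ψ'(t) = -t ψ(t)` turns the chain rule into `(ψ ∘ Ψ⁻¹)' = -Ψ⁻¹`, which is strictly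
decreasing because `Ψ⁻¹` is strictly increasing.
-/

open MeasureTheory Set Real ProbabilityTheory Filter

theorem MeasureTheory.setIntegral_pos_of_forall_pos {X : Type*} [MeasurableSpace X]
    {μ : Measure X} {f : X → ℝ} {s : Set X} (hs : MeasurableSet s) (hμs : μ s ≠ 0)
    (hf : IntegrableOn f s μ) (hpos : ∀ x ∈ s, 0 < f x) : 0 < ∫ x in s, f x ∂μ := by
  rw [setIntegral_pos_iff_support_of_nonneg_ae
    (ae_restrict_of_forall_mem hs fun x hx => (hpos x hx).le) hf,
    show Function.support f ∩ s = s from inter_eq_right.2 fun x hx => (hpos x hx).ne']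
  exact pos_iff_ne_zero.2 hμs

section Density

variable {f : ℝ → ℝ}

theorem integral_Iic_mem_Ioo_of_pos (hf : Integrable f) (hpos : ∀ t, 0 < f t)
    (hf1 : ∫ t, f t = 1) (p : ℝ) : ∫ t in Iic p, f t ∈ Ioo 0 1 := by
  have hsum := intervalIntegral.integral_Iic_add_Ioi (b := p) hf.integrableOn hf.integrableOn
  have hright : 0 < ∫ t in Ioi p, f t :=
    setIntegral_pos_of_forall_pos measurableSet_Ioi (by simp) hf.integrableOn fun t _ => hpos t
  exact ⟨setIntegral_pos_of_forall_pos measurableSet_Iic (by simp) hf.integrableOn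
    fun t _ => hpos t, by linarith⟩

theorem hasDerivAt_integral_Iic (hf : Integrable f) {x : ℝ} (hx : ContinuousAt f x) :
    HasDerivAt (fun p => ∫ t in Iic p, f t) (f x) x := by
  have hsplit : (fun p => ∫ t in Iic p, f t) =
      fun p => (∫ t in Iic 0, f t) + ∫ t in (0 : ℝ)..p, f t := funext fun p => by
    rw [← intervalIntegral.integral_Iic_sub_Iic hf.integrableOn hf.integrableOn]
    ring
  rw [hsplit]
  exact (intervalIntegral.integral_hasDerivAt_right hf.intervalIntegrable
    hf.aestronglyMeasurable.stronglyMeasurableAtFilter hx).const_add _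

end Density

section InverseFunction

variable {F F' g : ℝ → ℝ} {U : Set ℝ}

theorem StrictMono.strictMonoOn_of_rightInvOn (hF : StrictMono F) (hg : RightInvOn g F U) :
    StrictMonoOn g U := fun a ha b hb hab => hF.lt_iff_lt.1 (by rwa [hg ha, hg hb])

theorem StrictMono.continuousAt_of_rightInvOn (hF : StrictMono F) (hU : IsOpen U)
    (hFU : ∀ x, F x ∈ U) (hg : RightInvOn g F U) {s : ℝ} (hs : s ∈ U) : ContinuousAt g s := by
  refine (hF.strictMonoOn_of_rightInvOn hg).continuousAt_of_image_mem_nhds (hU.mem_nhds hs) ?_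
  have hsurj : g '' U = univ :=
    eq_univ_of_forall fun t => ⟨F t, hFU t, hF.injective (hg (hFU t))⟩
  rw [hsurj]
  exact univ_mem

theorem hasDerivAt_of_rightInvOn_of_deriv_pos (hF : ∀ x, HasDerivAt F (F' x) x)
    (hF' : ∀ x, 0 < F' x) (hU : IsOpen U) (hFU : ∀ x, F x ∈ U) (hg : RightInvOn g F U)
    {s : ℝ} (hs : s ∈ U) : HasDerivAt g (F' (g s))⁻¹ s :=
  (hF (g s)).of_local_left_inverse
    ((strictMono_of_hasDerivAt_pos hF hF').continuousAt_of_rightInvOn hU hFU hg hs)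
    (hF' (g s)).ne' (eventually_of_mem (hU.mem_nhds hs) fun _ hy => hg hy)

end InverseFunction

theorem StrictAntiOn.strictConcaveOn_of_hasDerivAt {D : Set ℝ} (hD : Convex ℝ D) (hDo : IsOpen D)
    {f f' : ℝ → ℝ} (hf : ∀ x ∈ D, HasDerivAt f (f' x) x) (hf' : StrictAntiOn f' D) :
    StrictConcaveOn ℝ D f := by
  refine StrictAntiOn.strictConcaveOn_of_deriv hD
    (fun x hx => (hf x hx).continuousAt.continuousWithinAt) ?_
  rw [hDo.interior_eq]
  exact hf'.congr fun x hx => (hf x hx).deriv.symm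

theorem gaussianPDFReal_zero_one :
    gaussianPDFReal 0 1 = fun t => (√(2 * π))⁻¹ * rexp (-t ^ 2 / 2) := by
  ext t
  simp [gaussianPDFReal]

theorem hasDerivAt_gaussianPDFReal (μ : ℝ) (v : NNReal) (x : ℝ) :
    HasDerivAt (gaussianPDFReal μ v) (-((x - μ) / v) * gaussianPDFReal μ v x) x := by
  have hexp : HasDerivAt (fun x => -(x - μ) ^ 2 / (2 * v)) (-((x - μ) / v)) x :=
    ((((hasDerivAt_id x).sub_const μ).pow 2).neg.div_const (2 * (v : ℝ))).congr_deriv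
      (by simp only [id]; ring)
  rw [gaussianPDFReal_def]
  exact (hexp.exp.const_mul (√(2 * π * v))⁻¹).congr_deriv (by ring)

theorem gaussian_strict_concave_general (ψ Ψ g : ℝ → ℝ)
    (hψ : ψ = fun t => (Real.sqrt (2 * Real.pi))⁻¹ * Real.exp (-t ^ 2 / 2))
    (hΨ : Ψ = fun p => ∫ t in Set.Iic p, ψ t)
    (hg2 : ∀ s ∈ Set.Ioo (0 : ℝ) 1, Ψ (g s) = s) :
    ∃ L' : ℝ → ℝ,
      (∀ s ∈ Set.Ioo (0 : ℝ) 1, HasDerivAt (fun u => ψ (g u)) (L' s) s) ∧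
      StrictAntiOn L' (Set.Ioo 0 1) ∧
      StrictConcaveOn ℝ (Set.Ioo 0 1) (fun s => ψ (g s)) := by
  rw [← gaussianPDFReal_zero_one] at hψ
  subst hψ hΨ
  have hψpos (t : ℝ) : 0 < gaussianPDFReal 0 1 t := gaussianPDFReal_pos 0 1 t one_ne_zero
  have hΨ' (x : ℝ) : HasDerivAt (fun p => ∫ t in Iic p, gaussianPDFReal 0 1 t)
      (gaussianPDFReal 0 1 x) x :=
    hasDerivAt_integral_Iic (integrable_gaussianPDFReal 0 1)
      (hasDerivAt_gaussianPDFReal 0 1 x).continuousAt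
  have hΨU (p : ℝ) : ∫ t in Iic p, gaussianPDFReal 0 1 t ∈ Ioo 0 1 :=
    integral_Iic_mem_Ioo_of_pos (integrable_gaussianPDFReal 0 1) hψpos
      (integral_gaussianPDFReal_eq_one 0 one_ne_zero) p
  have hderiv : ∀ s ∈ Ioo (0 : ℝ) 1, HasDerivAt (fun u => gaussianPDFReal 0 1 (g u)) (-g s) s :=
    fun s hs => ((hasDerivAt_gaussianPDFReal 0 1 (g s)).comp s
      (hasDerivAt_of_rightInvOn_of_deriv_pos hΨ' hψpos isOpen_Ioo hΨU hg2 hs)).congr_deriv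
      (by field_simp [(hψpos (g s)).ne']; simp)
  have hanti : StrictAntiOn (fun s => -g s) (Ioo 0 1) := fun a ha b hb hab =>
    neg_lt_neg ((strictMono_of_hasDerivAt_pos hΨ' hψpos).strictMonoOn_of_rightInvOn hg2 ha hb hab)
  exact ⟨fun s => -g s, hderiv, hanti,
    hanti.strictConcaveOn_of_hasDerivAt (convex_Ioo 0 1) isOpen_Ioo hderiv⟩

/-- For the standard Gaussian CDF `Ψ` with density `ψ` and inverse `g = Ψ⁻¹`, the
derivative of `s ↦ ψ(Ψ⁻¹(s))` exists on `(0,1)` and is strictly decreasing; consequently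
`ψ ∘ Ψ⁻¹` is strictly concave on `(0,1)`. -/
theorem gaussian_strict_concave (ψ Ψ g : ℝ → ℝ)
    (hψ : ψ = fun t => (Real.sqrt (2 * Real.pi))⁻¹ * Real.exp (-t ^ 2 / 2))
    (hΨ : Ψ = fun p => ∫ t in Set.Iic p, ψ t)
    (hg1 : ∀ t, g (Ψ t) = t)
    (hg2 : ∀ s ∈ Set.Ioo (0 : ℝ) 1, Ψ (g s) = s) :
    ∃ L' : ℝ → ℝ,
      (∀ s ∈ Set.Ioo (0 : ℝ) 1, HasDerivAt (fun u => ψ (g u)) (L' s) s) ∧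
      StrictAntiOn L' (Set.Ioo 0 1) ∧
      StrictConcaveOn ℝ (Set.Ioo 0 1) (fun s => ψ (g s)) :=
  gaussian_strict_concave_general ψ Ψ g hψ hΨ hg2
end

section
/- Let g : [0,1] → ℝ be continuous with g(0) = 0, g concave, g ≥ 0, and let w(s) = (1−s)^{m}(d − n s) with m = n−d−1 ≥ 0, n > d ≥ 1. If g is replaced by the linear function l(s) = g(d/n)·(ns/d), then ∫₀¹ w(s) g(s)^{d−1} ds ≥ ∫₀¹ w(s) l(s)^{d−1} ds = 0. -/
/-!
The weight `w(s) = (1 - s)^(n-d-1) (d - n s)` times `s^(d-1)` is the derivative of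
`s^d (1 - s)^(n-d)`, which vanishes at both ends of `[0, 1]`; since `l` is a multiple of `s`,
this gives `∫₀¹ w l^(d-1) = 0`. For the inequality, concavity and `g 0 = 0` make `g s / s`
antitone, so the chord `l` through `0` and `(d/n, g(d/n))` lies below `g` on `[0, d/n]`, where
`w ≥ 0`, and above `g` on `[d/n, 1]`, where `w ≤ 0`. Hence `w l^(d-1) ≤ w g^(d-1)` pointwise.
-/

open Set intervalIntegral

theorem hasDerivAt_pow_mul_one_sub_pow_s18 (k m : ℕ) (s : ℝ) :
    HasDerivAt (fun s : ℝ => s ^ (k + 1) * (1 - s) ^ (m + 1))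
      ((1 - s) ^ m * ((k + 1 : ℝ) - (k + m + 2) * s) * s ^ k) s := by
  have hpow := hasDerivAt_pow (k + 1) s
  have hsub := ((hasDerivAt_id' s).const_sub 1).fun_pow (m + 1)
  refine (hpow.fun_mul hsub).congr_deriv ?_
  simp only [Nat.add_sub_cancel]
  push_cast
  ring

theorem integral_one_sub_pow_mul_sub_mul_pow_eq_zero {n d : ℕ} (hd : 1 ≤ d) (hn : d < n) :
    ∫ s in (0 : ℝ)..1, (1 - s) ^ (n - d - 1) * ((d : ℝ) - n * s) * s ^ (d - 1) = 0 := by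
  obtain ⟨k, rfl⟩ : ∃ k, d = k + 1 := ⟨d - 1, by omega⟩
  obtain ⟨m, rfl⟩ : ∃ m, n = k + m + 2 := ⟨n - k - 2, by omega⟩
  have hexp : k + m + 2 - (k + 1) - 1 = m := by omega
  rw [hexp, integral_eq_sub_of_hasDerivAt (fun s _ => by
    simpa using hasDerivAt_pow_mul_one_sub_pow_s18 k m s)]
  · simp
  · exact Continuous.intervalIntegrable (by fun_prop) 0 1

section Chord

variable {S : Set ℝ} {g : ℝ → ℝ} {a s : ℝ}

theorem ConcaveOn.div_le_div_of_le (hg : ConcaveOn ℝ S g) (h0S : 0 ∈ S) (h0 : g 0 = 0)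
    {x y : ℝ} (hx : x ∈ S) (hy : y ∈ S) (hx0 : 0 < x) (hxy : x ≤ y) : g y / y ≤ g x / x := by
  simpa [slope_def_field, h0] using
    hg.antitoneOn_slope_gt h0S ⟨hx, hx0⟩ ⟨hy, hx0.trans_le hxy⟩ hxy

theorem ConcaveOn.mul_div_le_of_le (hg : ConcaveOn ℝ S g) (h0S : 0 ∈ S) (h0 : g 0 = 0)
    (ha : a ∈ S) (hs : s ∈ S) (hs0 : 0 ≤ s) (hsa : s ≤ a) : g a * (s / a) ≤ g s := by
  rcases hs0.eq_or_lt with rfl | hs0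
  · simp [h0]
  calc g a * (s / a) = g a / a * s := by ring
    _ ≤ g s / s * s :=
      mul_le_mul_of_nonneg_right (hg.div_le_div_of_le h0S h0 hs ha hs0 hsa) hs0.le
    _ = g s := div_mul_cancel₀ _ hs0.ne'

theorem ConcaveOn.le_mul_div_of_le (hg : ConcaveOn ℝ S g) (h0S : 0 ∈ S) (h0 : g 0 = 0)
    (ha : a ∈ S) (hs : s ∈ S) (ha0 : 0 < a) (has : a ≤ s) : g s ≤ g a * (s / a) := by
  have hs0 : 0 < s := ha0.trans_le has
  calc g s = g s / s * s := (div_mul_cancel₀ _ hs0.ne').symm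
    _ ≤ g a / a * s :=
      mul_le_mul_of_nonneg_right (hg.div_le_div_of_le h0S h0 ha hs ha0 has) hs0.le
    _ = g a * (s / a) := by ring

end Chord

theorem integral_mul_chord_pow_le_integral_mul_pow {g w : ℝ → ℝ} {a b : ℝ} (k : ℕ)
    (hcont : ContinuousOn g (Icc 0 b)) (h0 : g 0 = 0) (hconc : ConcaveOn ℝ (Icc 0 b) g)
    (hnn : ∀ s ∈ Icc 0 b, 0 ≤ g s) (ha : a ∈ Ioc 0 b) (hw : ContinuousOn w (Icc 0 b))
    (hw_nonneg : ∀ s ∈ Icc 0 a, 0 ≤ w s) (hw_nonpos : ∀ s ∈ Icc a b, w s ≤ 0) :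
    ∫ s in (0 : ℝ)..b, w s * (g a * (s / a)) ^ k ≤ ∫ s in (0 : ℝ)..b, w s * g s ^ k := by
  have hb : 0 ≤ b := ha.1.le.trans ha.2
  have h0S : (0 : ℝ) ∈ Icc 0 b := ⟨le_rfl, hb⟩
  have haS : a ∈ Icc 0 b := ⟨ha.1.le, ha.2⟩
  refine integral_mono_on hb ?_ ?_ fun s hs => ?_
  · refine ContinuousOn.intervalIntegrable ?_
    rw [uIcc_of_le hb]
    exact hw.mul (by fun_prop)
  · refine ContinuousOn.intervalIntegrable ?_
    rw [uIcc_of_le hb]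
    exact hw.mul (hcont.pow k)
  rcases le_total s a with hsa | has
  · have hchord := hconc.mul_div_le_of_le h0S h0 haS hs hs.1 hsa
    have hl0 : 0 ≤ g a * (s / a) := mul_nonneg (hnn a haS) (div_nonneg hs.1 ha.1.le)
    exact mul_le_mul_of_nonneg_left (pow_le_pow_left₀ hl0 hchord k) (hw_nonneg s ⟨hs.1, hsa⟩)
  · have hchord := hconc.le_mul_div_of_le h0S h0 haS hs ha.1 has
    exact mul_le_mul_of_nonpos_left (pow_le_pow_left₀ (hnn s hs) hchord k)
      (hw_nonpos s ⟨has, hs.2⟩)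

/-- Let `g : [0,1] → ℝ` be continuous, concave, nonnegative with `g 0 = 0`, and let
`w(s) = (1−s)^{n−d−1}(d − n s)` for integers `n > d ≥ 1`. With the linear function
`l(s) = g(d/n)·(n s/d)` one has `∫₀¹ w l^{d−1} = 0` and
`∫₀¹ w g^{d−1} ≥ ∫₀¹ w l^{d−1}`. -/
theorem weighted_integral_comparison (n d : ℕ) (hd : 1 ≤ d) (hn : d < n)
    (g : ℝ → ℝ) (hcont : ContinuousOn g (Set.Icc 0 1)) (h0 : g 0 = 0)
    (hconc : ConcaveOn ℝ (Set.Icc 0 1) g)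
    (hnn : ∀ s ∈ Set.Icc (0 : ℝ) 1, 0 ≤ g s)
    (l : ℝ → ℝ) (hl : ∀ s, l s = g ((d : ℝ) / n) * ((n : ℝ) * s / d)) :
    (∫ s in (0:ℝ)..1, (1 - s) ^ (n - d - 1) * ((d : ℝ) - n * s) * l s ^ (d - 1)) = 0 ∧
    (∫ s in (0:ℝ)..1, (1 - s) ^ (n - d - 1) * ((d : ℝ) - n * s) * l s ^ (d - 1))
      ≤ ∫ s in (0:ℝ)..1, (1 - s) ^ (n - d - 1) * ((d : ℝ) - n * s) * g s ^ (d - 1) := by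
  have hn0 : (0 : ℝ) < n := by exact_mod_cast (by omega : 0 < n)
  have hd0 : (0 : ℝ) < d := by exact_mod_cast hd
  have hdn : (d : ℝ) ≤ n := by exact_mod_cast hn.le
  set a : ℝ := d / n
  have hna : n * a = d := mul_div_cancel₀ _ hn0.ne'
  have hl' : ∀ s, l s = g a * (s / a) := fun s => by rw [hl, div_div_eq_mul_div, mul_comm s]
  simp_rw [hl']
  constructor
  · have hlin : ∀ s, (1 - s) ^ (n - d - 1) * ((d : ℝ) - n * s) * (g a * (s / a)) ^ (d - 1) =
        (g a / a) ^ (d - 1) * ((1 - s) ^ (n - d - 1) * ((d : ℝ) - n * s) * s ^ (d - 1)) :=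
      fun s => by ring
    simp_rw [hlin, integral_const_mul, integral_one_sub_pow_mul_sub_mul_pow_eq_zero hd hn,
      mul_zero]
  · have ha : a ∈ Ioc 0 1 := ⟨div_pos hd0 hn0, (div_le_one hn0).2 hdn⟩
    refine integral_mul_chord_pow_le_integral_mul_pow (d - 1) hcont h0 hconc hnn ha
      (by fun_prop) (fun s hs => ?_) (fun s hs => ?_)
    · have : (0 : ℝ) ≤ 1 - s := by linarith [hs.2, ha.2]
      have : n * s ≤ d := hna ▸ mul_le_mul_of_nonneg_left hs.2 hn0.le
      exact mul_nonneg (by positivity) (by linarith)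
    · have : (0 : ℝ) ≤ 1 - s := by linarith [hs.2]
      have : (d : ℝ) ≤ n * s := hna ▸ mul_le_mul_of_nonneg_left hs.1 hn0.le
      exact mul_nonpos_of_nonneg_of_nonpos (by positivity) (by linarith)
end
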